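/- If K is algebraically closed and (k,s) ≠ (1,3), then for every nonzero a ∈ K there is an isomorphism of K-algebras A^{k,s}(a,0) ≅ A^{k,s}(1,0). -/
import Mathlib


namespace QT

/-- The generators of the free algebra: the two vertex idempotents `e1, e2`,
the loops `al` (α at vertex 1) and `et` (η at vertex 2), and the arrows
`be` (β : 1 → 2) and `ga` (γ : 2 → 1). -/
inductive Gen : Type
  | e1 : Gen
  | e2 : Gen
  | al : Gen
  | be : Gen
  | ga : Gen
  | et : Gen

open Gen

/-- Generators as elements of the free algebra. -/
noncomputable def gen (K : Type) [Field K] (g : Gen) : FreeAlgebra K Gen :=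
  FreeAlgebra.ι K g

/-- The defining relations of the algebra `A^{k,s}(a,c)`: the path-algebra
relations for the quiver with two vertices, loops α, η and arrows β, γ
(paths composed left to right), together with the relations
βη = (αβγ)^{k−1}αβ, ηγ = (γαβ)^{k−1}γα, α² = a(βγα)^{k−1}βγ + c(βγα)^k,
γβ = η^{s−1}, α²β = 0, γα² = 0. -/
inductive Rel (K : Type) [Field K] (k s : ℕ) (a c : K) :
    FreeAlgebra K Gen → FreeAlgebra K Gen → Prop
  | idem1 : Rel K k s a c (gen K e1 * gen K e1) (gen K e1)
  | idem2 : Rel K k s a c (gen K e2 * gen K e2) (gen K e2)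
  | orth12 : Rel K k s a c (gen K e1 * gen K e2) 0
  | orth21 : Rel K k s a c (gen K e2 * gen K e1) 0
  | sum_idem : Rel K k s a c (gen K e1 + gen K e2) 1
  | al_left : Rel K k s a c (gen K e1 * gen K al) (gen K al)
  | al_right : Rel K k s a c (gen K al * gen K e1) (gen K al)
  | be_left : Rel K k s a c (gen K e1 * gen K be) (gen K be)
  | be_right : Rel K k s a c (gen K be * gen K e2) (gen K be)
  | ga_left : Rel K k s a c (gen K e2 * gen K ga) (gen K ga)
  | ga_right : Rel K k s a c (gen K ga * gen K e1) (gen K ga)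
  | et_left : Rel K k s a c (gen K e2 * gen K et) (gen K et)
  | et_right : Rel K k s a c (gen K et * gen K e2) (gen K et)
  | rel_beta_eta : Rel K k s a c (gen K be * gen K et)
      ((gen K al * gen K be * gen K ga) ^ (k - 1) * (gen K al * gen K be))
  | rel_eta_gamma : Rel K k s a c (gen K et * gen K ga)
      ((gen K ga * gen K al * gen K be) ^ (k - 1) * (gen K ga * gen K al))
  | rel_alpha_sq : Rel K k s a c (gen K al * gen K al)
      (a • ((gen K be * gen K ga * gen K al) ^ (k - 1) * (gen K be * gen K ga)) +
        c • (gen K be * gen K ga * gen K al) ^ k)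
  | rel_gamma_beta : Rel K k s a c (gen K ga * gen K be) ((gen K et) ^ (s - 1))
  | rel_alpha_sq_beta : Rel K k s a c (gen K al * gen K al * gen K be) 0
  | rel_gamma_alpha_sq : Rel K k s a c (gen K ga * (gen K al * gen K al)) 0

/-- The algebra `A^{k,s}(a,c)` of quaternion type with two simple modules. -/
abbrev Aa (K : Type) [Field K] (k s : ℕ) (a c : K) : Type :=
  RingQuot (Rel K k s a c)

variable (K : Type) [Field K] (k s : ℕ) (a c : K)

/-- The idempotent e₁ in `A^{k,s}(a,c)`. -/
noncomputable def E1 : Aa K k s a c := RingQuot.mkAlgHom K (Rel K k s a c) (gen K e1)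
/-- The idempotent e₂ in `A^{k,s}(a,c)`. -/
noncomputable def E2 : Aa K k s a c := RingQuot.mkAlgHom K (Rel K k s a c) (gen K e2)
/-- The loop α in `A^{k,s}(a,c)`. -/
noncomputable def Al : Aa K k s a c := RingQuot.mkAlgHom K (Rel K k s a c) (gen K al)
/-- The arrow β in `A^{k,s}(a,c)`. -/
noncomputable def Be : Aa K k s a c := RingQuot.mkAlgHom K (Rel K k s a c) (gen K be)
/-- The arrow γ in `A^{k,s}(a,c)`. -/
noncomputable def Ga : Aa K k s a c := RingQuot.mkAlgHom K (Rel K k s a c) (gen K ga)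
/-- The loop η in `A^{k,s}(a,c)`. -/
noncomputable def Et : Aa K k s a c := RingQuot.mkAlgHom K (Rel K k s a c) (gen K et)

/-- The commutator subspace [A,A]: the K-subspace spanned by all commutators. -/
noncomputable def comm : Submodule K (Aa K k s a c) :=
  Submodule.span K {z : Aa K k s a c | ∃ u v : Aa K k s a c, z = u * v - v * u}

/-- Index type for the basis B = B₁ ∪ B₂ ∪ B₃ ∪ B₄ of `A^{k,s}(a,c)`. -/
abbrev BIdx (k s : ℕ) : Type :=
  ((Fin k ⊕ Fin k) ⊕ (Fin (k - 1) ⊕ Fin (k + 1))) ⊕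
    ((Fin (s + 1) ⊕ Fin (k - 1)) ⊕ ((Fin k ⊕ Fin k) ⊕ (Fin k ⊕ Fin k)))

/-- The family of elements of `A^{k,s}(a,c)` given by
B₁ = {α(βγα)^n, (βγα)^nβγ : 0 ≤ n ≤ k−1} ∪ {(βγα)^m : 1 ≤ m ≤ k−1} ∪ {(αβγ)^ℓ : 0 ≤ ℓ ≤ k},
B₂ = {η^t : 0 ≤ t ≤ s} ∪ {(γαβ)^m : 1 ≤ m ≤ k−1},
B₃ = {(βγα)^nβ, α(βγα)^nβ : 0 ≤ n ≤ k−1},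
B₄ = {(γαβ)^nγ, (γαβ)^nγα : 0 ≤ n ≤ k−1}. -/
noncomputable def bVec : BIdx k s → Aa K k s a c := fun i =>
  let α := Al K k s a c
  let β := Be K k s a c
  let γ := Ga K k s a c
  let η := Et K k s a c
  match i with
  | .inl (.inl (.inl n)) => α * (β * γ * α) ^ (n : ℕ)
  | .inl (.inl (.inr n)) => (β * γ * α) ^ (n : ℕ) * (β * γ)
  | .inl (.inr (.inl m)) => (β * γ * α) ^ ((m : ℕ) + 1)
  | .inl (.inr (.inr l)) => (α * β * γ) ^ (l : ℕ)
  | .inr (.inl (.inl t)) => η ^ (t : ℕ)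
  | .inr (.inl (.inr m)) => (γ * α * β) ^ ((m : ℕ) + 1)
  | .inr (.inr (.inl (.inl n))) => (β * γ * α) ^ (n : ℕ) * β
  | .inr (.inr (.inl (.inr n))) => α * (β * γ * α) ^ (n : ℕ) * β
  | .inr (.inr (.inr (.inl n))) => (γ * α * β) ^ (n : ℕ) * γ
  | .inr (.inr (.inr (.inr n))) => (γ * α * β) ^ (n : ℕ) * (γ * α)

/-- `ψ` is the linear form on `A^{k,s}(a,c)` sending η^s and (αβγ)^k to 1 and every
other element of the basis B to 0. -/
noncomputable def IsPsi (ψ : Aa K k s a c →ₗ[K] K) : Prop :=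
  ψ ((Et K k s a c) ^ s) = 1 ∧
  ψ ((Al K k s a c * Be K k s a c * Ga K k s a c) ^ k) = 1 ∧
  ∀ i : BIdx k s, bVec K k s a c i ≠ (Et K k s a c) ^ s →
    bVec K k s a c i ≠ (Al K k s a c * Be K k s a c * Ga K k s a c) ^ k →
    ψ (bVec K k s a c i) = 0

/-- The set T₁(A) = {x ∈ A : x² ∈ [A,A]} (characteristic 2). -/
noncomputable def T1 : Set (Aa K k s a c) :=
  {z : Aa K k s a c | z ^ 2 ∈ comm K k s a c}

/-- The orthogonal space T₁(A)^⊥ of T₁(A) with respect to the symmetrising form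
⟨u,v⟩ = ψ(uv): the space of all z with ψ(z·m) = 0 for all m ∈ T₁(A). -/
noncomputable def perp (ψ : Aa K k s a c →ₗ[K] K) : Submodule K (Aa K k s a c) :=
  ⨅ m ∈ T1 K k s a c, LinearMap.ker (ψ ∘ₗ LinearMap.mulRight K m)

end QT

namespace QT

open Gen

section Maps

variable (K : Type) [Field K] (k s : ℕ) (a c : K)

/-- generators scaled by scalars. -/
noncomputable def sgen (l m n r : K) : Gen → Aa K k s a c
  | .e1 => E1 K k s a c
  | .e2 => E2 K k s a c
  | .al => l • Al K k s a c
  | .be => m • Be K k s a c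
  | .ga => n • Ga K k s a c
  | .et => r • Et K k s a c

/-- Lift of the scaled generators to the free algebra. -/
noncomputable def sLift (l m n r : K) : FreeAlgebra K Gen →ₐ[K] Aa K k s a c :=
  FreeAlgebra.lift K (sgen K k s a c l m n r)

theorem sLift_rel (a' l m n r : K)
    (h1 : m * r = (l * m * n) ^ (k - 1) * (l * m))
    (h2 : r * n = (n * l * m) ^ (k - 1) * (n * l))
    (h3 : l * l * a = a' * ((m * n * l) ^ (k - 1) * (m * n)))
    (h4 : n * m = r ^ (s - 1)) :
    ∀ ⦃x y⦄, Rel K k s a' 0 x y → sLift K k s a 0 l m n r x = sLift K k s a 0 l m n r y := by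
  intro x y h
  have R : ∀ x y : FreeAlgebra K Gen, Rel K k s a 0 x y →
      RingQuot.mkAlgHom K (Rel K k s a 0) x = RingQuot.mkAlgHom K (Rel K k s a 0) y :=
    fun _ _ h => RingQuot.mkAlgHom_rel K h
  cases h <;>
    simp only [map_mul, map_add, map_smul, map_pow, map_one, map_zero, sLift, gen,
      FreeAlgebra.lift_ι_apply, sgen, E1, E2, Al, Be, Ga, Et, smul_mul_assoc, mul_smul_comm,
      smul_pow, smul_smul, smul_zero, zero_smul, add_zero, one_smul]
  case idem1 => simpa only [map_mul, gen] using R _ _ Rel.idem1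
  case idem2 => simpa only [map_mul, gen] using R _ _ Rel.idem2
  case orth12 => simpa only [map_mul, map_zero, gen] using R _ _ Rel.orth12
  case orth21 => simpa only [map_mul, map_zero, gen] using R _ _ Rel.orth21
  case sum_idem => simpa only [map_add, map_one, gen] using R _ _ Rel.sum_idem
  case al_left =>
    have := R _ _ Rel.al_left
    simp only [map_mul, gen] at this
    rw [this]
  case al_right =>
    have := R _ _ Rel.al_right
    simp only [map_mul, gen] at this
    rw [this]
  case be_left =>
    have := R _ _ Rel.be_left
    simp only [map_mul, gen] at this
    rw [this]
  case be_right =>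
    have := R _ _ Rel.be_right
    simp only [map_mul, gen] at this
    rw [this]
  case ga_left =>
    have := R _ _ Rel.ga_left
    simp only [map_mul, gen] at this
    rw [this]
  case ga_right =>
    have := R _ _ Rel.ga_right
    simp only [map_mul, gen] at this
    rw [this]
  case et_left =>
    have := R _ _ Rel.et_left
    simp only [map_mul, gen] at this
    rw [this]
  case et_right =>
    have := R _ _ Rel.et_right
    simp only [map_mul, gen] at this
    rw [this]
  case rel_beta_eta =>
    have := R _ _ Rel.rel_beta_eta
    simp only [map_mul, map_pow, gen] at this
    rw [this]
    congr 1
    linear_combination h1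
  case rel_eta_gamma =>
    have := R _ _ Rel.rel_eta_gamma
    simp only [map_mul, map_pow, gen] at this
    rw [this]
    congr 1
    linear_combination h2
  case rel_alpha_sq =>
    have := R _ _ (Rel.rel_alpha_sq (K := K) (k := k) (s := s) (a := a) (c := 0))
    simp only [map_mul, map_pow, map_add, map_smul, zero_smul, add_zero, gen] at this
    rw [this, smul_smul]
    congr 1
    linear_combination h3
  case rel_gamma_beta =>
    have := R _ _ Rel.rel_gamma_beta
    simp only [map_mul, map_pow, gen] at this
    rw [this]
    congr 1
    linear_combination h4
  case rel_alpha_sq_beta =>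
    have := R _ _ Rel.rel_alpha_sq_beta
    simp only [map_mul, map_zero, gen] at this
    rw [this, smul_zero]
  case rel_gamma_alpha_sq =>
    have := R _ _ Rel.rel_gamma_alpha_sq
    simp only [map_mul, map_zero, gen] at this
    rw [this, smul_zero]

/-- The scaling algebra homomorphism. -/
noncomputable def scaleHom (a' l m n r : K)
    (h1 : m * r = (l * m * n) ^ (k - 1) * (l * m))
    (h2 : r * n = (n * l * m) ^ (k - 1) * (n * l))
    (h3 : l * l * a = a' * ((m * n * l) ^ (k - 1) * (m * n)))
    (h4 : n * m = r ^ (s - 1)) :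
    Aa K k s a' 0 →ₐ[K] Aa K k s a 0 :=
  RingQuot.liftAlgHom K ⟨sLift K k s a 0 l m n r, sLift_rel K k s a a' l m n r h1 h2 h3 h4⟩

theorem scaleHom_comp (a' l m n r l' m' n' r' : K)
    (h1 : m * r = (l * m * n) ^ (k - 1) * (l * m))
    (h2 : r * n = (n * l * m) ^ (k - 1) * (n * l))
    (h3 : l * l * a = a' * ((m * n * l) ^ (k - 1) * (m * n)))
    (h4 : n * m = r ^ (s - 1))
    (h1' : m' * r' = (l' * m' * n') ^ (k - 1) * (l' * m'))
    (h2' : r' * n' = (n' * l' * m') ^ (k - 1) * (n' * l'))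
    (h3' : l' * l' * a' = a * ((m' * n' * l') ^ (k - 1) * (m' * n')))
    (h4' : n' * m' = r' ^ (s - 1))
    (hl : l * l' = 1) (hm : m * m' = 1) (hn : n * n' = 1) (hr : r * r' = 1) :
    (scaleHom K k s a a' l m n r h1 h2 h3 h4).comp
      (scaleHom K k s a' a l' m' n' r' h1' h2' h3' h4') = AlgHom.id K (Aa K k s a 0) := by
  apply RingQuot.ringQuot_ext'
  apply FreeAlgebra.hom_ext
  funext g
  cases g <;>
    simp [scaleHom, gen, sLift, sgen, RingQuot.liftAlgHom_mkAlgHom_apply,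
      FreeAlgebra.lift_ι_apply, smul_smul, hl, hm, hn, hr, mul_comm,
      E1, E2, Al, Be, Ga, Et]

end Maps

end QT

open QT in
/-- If K is algebraically closed and (k,s) ≠ (1,3), then for every
nonzero a ∈ K there is an isomorphism of K-algebras A^{k,s}(a,0) ≅ A^{k,s}(1,0). -/
theorem statement5 (K : Type) [Field K] [IsAlgClosed K] (k s : ℕ)
    (hk : 1 ≤ k) (hs : 3 ≤ s) (hks : (k, s) ≠ (1, 3)) :
    ∀ a : K, a ≠ 0 → Nonempty (Aa K k s a 0 ≃ₐ[K] Aa K k s 1 0) := by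
  intro a ha
  have hdlt : 3 * k + 3 * s < 4 * k * s := by
    rcases Nat.lt_or_ge k 2 with h | h
    · have hk1 : k = 1 := by omega
      have hs4 : s ≠ 3 := fun h3 => hks (by rw [hk1, h3])
      subst hk1; omega
    · nlinarith
  set d : ℕ := 4 * k * s - (3 * k + 3 * s) with hdd
  have hd0 : 0 < d := by omega
  obtain ⟨b, hb⟩ := IsAlgClosed.exists_pow_nat_eq a hd0
  have hb0 : b ≠ 0 := by
    intro h0
    exact ha (by rw [← hb, h0, zero_pow hd0.ne'])
  set u : Kˣ := Units.mk0 b hb0 with hu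
  -- exponents
  set E : ℤ := 1 - ((k : ℤ) - 1) * ((s : ℤ) - 1) with hE
  set N : ℤ := (k : ℤ) * ((s : ℤ) - 1) with hN
  -- coercion helpers
  have hmul : ∀ X Y : ℤ, ((u ^ X : Kˣ) : K) * ((u ^ Y : Kˣ) : K) = ((u ^ (X + Y) : Kˣ) : K) := by
    intro X Y; rw [zpow_add, Units.val_mul]
  have hpow : ∀ (X : ℤ) (p : ℕ), (((u ^ X : Kˣ) : K)) ^ p = ((u ^ (X * p) : Kˣ) : K) := by
    intro X p; rw [zpow_mul, zpow_natCast, Units.val_pow_eq_pow_val]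
  have hcongr : ∀ X Y : ℤ, X = Y → ((u ^ X : Kˣ) : K) = ((u ^ Y : Kˣ) : K) := by
    intro X Y h; rw [h]
  have hone : ((u ^ (0 : ℤ) : Kˣ) : K) = 1 := by simp
  have haU : a = ((u ^ (d : ℤ) : Kˣ) : K) := by
    rw [zpow_natCast, Units.val_pow_eq_pow_val, hu, Units.val_mk0, hb]
  have hcast : ((k - 1 : ℕ) : ℤ) = (k : ℤ) - 1 := by omega
  have hscast : ((s - 1 : ℕ) : ℤ) = (s : ℤ) - 1 := by omega
  have hdcast : ((d : ℕ) : ℤ) = 4 * (k : ℤ) * (s : ℤ) - 3 * (k : ℤ) - 3 * (s : ℤ) := by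
    rw [hdd, Nat.cast_sub hdlt.le]; push_cast; ring
  -- scalars
  set l : K := ((u ^ E : Kˣ) : K) with hl'
  set n : K := ((u ^ N : Kˣ) : K) with hn'
  set r : K := ((u ^ (k : ℤ) : Kˣ) : K) with hr'
  set l' : K := ((u ^ (-E) : Kˣ) : K) with hl''
  set n' : K := ((u ^ (-N) : Kˣ) : K) with hn''
  set r' : K := ((u ^ (-(k : ℤ)) : Kˣ) : K) with hr''
  have h1 : (1 : K) * r = (l * 1 * n) ^ (k - 1) * (l * 1) := by
    simp only [hl', hn', hr', hl'', hn'', hr'', haU, one_mul, mul_one, hmul, hpow]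
    apply hcongr
    simp only [hE, hN, hcast, hscast, hdcast]
    all_goals ring
  have h2 : r * n = (n * l * 1) ^ (k - 1) * (n * l) := by
    simp only [hl', hn', hr', hl'', hn'', hr'', haU, one_mul, mul_one, hmul, hpow]
    apply hcongr
    simp only [hE, hN, hcast, hscast, hdcast]
    all_goals ring
  have h3 : l * l * a = 1 * ((1 * n * l) ^ (k - 1) * (1 * n)) := by
    simp only [hl', hn', hr', hl'', hn'', hr'', haU, one_mul, mul_one, hmul, hpow]
    apply hcongr
    simp only [hE, hN, hcast, hscast, hdcast]
    all_goals ring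
  have h4 : n * (1 : K) = r ^ (s - 1) := by
    simp only [hl', hn', hr', hl'', hn'', hr'', haU, one_mul, mul_one, hmul, hpow]
    apply hcongr
    simp only [hE, hN, hcast, hscast, hdcast]
    all_goals ring
  have h1' : (1 : K) * r' = (l' * 1 * n') ^ (k - 1) * (l' * 1) := by
    simp only [hl', hn', hr', hl'', hn'', hr'', haU, one_mul, mul_one, hmul, hpow]
    apply hcongr
    simp only [hE, hN, hcast, hscast, hdcast]
    all_goals ring
  have h2' : r' * n' = (n' * l' * 1) ^ (k - 1) * (n' * l') := by
    simp only [hl', hn', hr', hl'', hn'', hr'', haU, one_mul, mul_one, hmul, hpow]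
    apply hcongr
    simp only [hE, hN, hcast, hscast, hdcast]
    all_goals ring
  have h3' : l' * l' * 1 = a * ((1 * n' * l') ^ (k - 1) * (1 * n')) := by
    simp only [hl', hn', hr', hl'', hn'', hr'', haU, one_mul, mul_one, hmul, hpow]
    apply hcongr
    simp only [hE, hN, hcast, hscast, hdcast]
    all_goals ring
  have h4' : n' * (1 : K) = r' ^ (s - 1) := by
    simp only [hl', hn', hr', hl'', hn'', hr'', haU, one_mul, mul_one, hmul, hpow]
    apply hcongr
    simp only [hE, hN, hcast, hscast, hdcast]
    all_goals ring
  have hll : l * l' = 1 := by rw [hmul]; simp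
  have hll' : l' * l = 1 := by rw [hmul]; simp
  have hnn : n * n' = 1 := by rw [hmul]; simp
  have hnn' : n' * n = 1 := by rw [hmul]; simp
  have hrr : r * r' = 1 := by rw [hmul]; simp
  have hrr' : r' * r = 1 := by rw [hmul]; simp
  refine ⟨AlgEquiv.ofAlgHom
    (scaleHom K k s 1 a l' 1 n' r' h1' h2' h3' h4')
    (scaleHom K k s a 1 l 1 n r h1 h2 h3 h4)
    (scaleHom_comp K k s 1 a l' 1 n' r' l 1 n r h1' h2' h3' h4' h1 h2 h3 h4
      hll' (one_mul 1) hnn' hrr')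
    (scaleHom_comp K k s a 1 l 1 n r l' 1 n' r' h1 h2 h3 h4 h1' h2' h3' h4'
      hll (one_mul 1) hnn hrr)⟩
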